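/- If a topological space X can be written as a union of fewer than 𝔟 many Hurewicz subspaces, then X has property E**_ω: for every sequence of countable open covers (U_n) there exist finite V_n ⊆ U_n such that every x ∈ X lies in ⋃V_n for all but finitely many n. -/
import Mathlib


open Set Filter Topology

/-- `𝒰` is an open cover of the space `X`. -/
def IsOpenCover {X : Type} [TopologicalSpace X] (𝒰 : Set (Set X)) : Prop :=
  (∀ u ∈ 𝒰, IsOpen u) ∧ ⋃₀ 𝒰 = Set.univ

/-- The star of a set `A` with respect to a collection `𝒰`. -/
def st {X : Type} (A : Set X) (𝒰 : Set (Set X)) : Set X :=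
  ⋃₀ {u ∈ 𝒰 | (u ∩ A).Nonempty}
/-- Eventual domination `f ≤* g`. -/
def EvLE (f g : ℕ → ℕ) : Prop := ∀ᶠ n in Filter.atTop, f n ≤ g n

/-- The dominating number `𝔡`. -/
noncomputable def dominatingNumber : Cardinal :=
  sInf {c | ∃ D : Set (ℕ → ℕ),
    (∀ g : ℕ → ℕ, ∃ f ∈ D, EvLE g f) ∧ Cardinal.mk D = c}

/-- The bounding number `𝔟`. -/
noncomputable def boundingNumber : Cardinal :=
  sInf {c | ∃ B : Set (ℕ → ℕ),
    (¬ ∃ g : ℕ → ℕ, ∀ f ∈ B, EvLE f g) ∧ Cardinal.mk B = c}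
/-- The Menger property `S_fin(𝒪,𝒪)`. -/
def MengerSpace (X : Type) [TopologicalSpace X] : Prop :=
  ∀ 𝒰 : ℕ → Set (Set X), (∀ n, IsOpenCover (𝒰 n)) →
    ∃ 𝒱 : ℕ → Set (Set X), (∀ n, (𝒱 n).Finite ∧ 𝒱 n ⊆ 𝒰 n) ∧
      ∀ x : X, ∃ n, x ∈ ⋃₀ 𝒱 n

/-- The Hurewicz property. -/
def HurewiczSpace (X : Type) [TopologicalSpace X] : Prop :=
  ∀ 𝒰 : ℕ → Set (Set X), (∀ n, IsOpenCover (𝒰 n)) →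
    ∃ 𝒱 : ℕ → Set (Set X), (∀ n, (𝒱 n).Finite ∧ 𝒱 n ⊆ 𝒰 n) ∧
      ∀ x : X, ∀ᶠ n in Filter.atTop, x ∈ ⋃₀ 𝒱 n

/-- The star-Menger property. -/
def StarMengerSpace (X : Type) [TopologicalSpace X] : Prop :=
  ∀ 𝒰 : ℕ → Set (Set X), (∀ n, IsOpenCover (𝒰 n)) →
    ∃ 𝒱 : ℕ → Set (Set X), (∀ n, (𝒱 n).Finite ∧ 𝒱 n ⊆ 𝒰 n) ∧
      ∀ x : X, ∃ n, x ∈ st (⋃₀ 𝒱 n) (𝒰 n)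

/-- The star-Hurewicz property. -/
def StarHurewiczSpace (X : Type) [TopologicalSpace X] : Prop :=
  ∀ 𝒰 : ℕ → Set (Set X), (∀ n, IsOpenCover (𝒰 n)) →
    ∃ 𝒱 : ℕ → Set (Set X), (∀ n, (𝒱 n).Finite ∧ 𝒱 n ⊆ 𝒰 n) ∧
      ∀ x : X, ∀ᶠ n in Filter.atTop, x ∈ st (⋃₀ 𝒱 n) (𝒰 n)

/-- The strongly star-Menger property. -/
def StronglyStarMengerSpace (X : Type) [TopologicalSpace X] : Prop :=
  ∀ 𝒰 : ℕ → Set (Set X), (∀ n, IsOpenCover (𝒰 n)) →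
    ∃ F : ℕ → Set X, (∀ n, (F n).Finite) ∧
      ∀ x : X, ∃ n, x ∈ st (F n) (𝒰 n)

/-- The strongly star-Hurewicz property. -/
def StronglyStarHurewiczSpace (X : Type) [TopologicalSpace X] : Prop :=
  ∀ 𝒰 : ℕ → Set (Set X), (∀ n, IsOpenCover (𝒰 n)) →
    ∃ F : ℕ → Set X, (∀ n, (F n).Finite) ∧
      ∀ x : X, ∀ᶠ n in Filter.atTop, x ∈ st (F n) (𝒰 n)

/-- The star-Lindelöf property. -/
def StarLindelofSpace (X : Type) [TopologicalSpace X] : Prop :=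
  ∀ 𝒰 : Set (Set X), IsOpenCover 𝒰 →
    ∃ 𝒱 ⊆ 𝒰, 𝒱.Countable ∧ st (⋃₀ 𝒱) 𝒰 = Set.univ

/-- The strongly star-Lindelöf property. -/
def StronglyStarLindelofSpace (X : Type) [TopologicalSpace X] : Prop :=
  ∀ 𝒰 : Set (Set X), IsOpenCover 𝒰 →
    ∃ C : Set X, C.Countable ∧ st C 𝒰 = Set.univ

/-- Property `E*_ω` (countably Menger). -/
def EStarOmega (X : Type) [TopologicalSpace X] : Prop :=
  ∀ 𝒰 : ℕ → Set (Set X), (∀ n, IsOpenCover (𝒰 n) ∧ (𝒰 n).Countable) →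
    ∃ 𝒱 : ℕ → Set (Set X), (∀ n, (𝒱 n).Finite ∧ 𝒱 n ⊆ 𝒰 n) ∧
      ∀ x : X, ∃ n, x ∈ ⋃₀ 𝒱 n

/-- Property `E**_ω` (countably Hurewicz). -/
def EStarStarOmega (X : Type) [TopologicalSpace X] : Prop :=
  ∀ 𝒰 : ℕ → Set (Set X), (∀ n, IsOpenCover (𝒰 n) ∧ (𝒰 n).Countable) →
    ∃ 𝒱 : ℕ → Set (Set X), (∀ n, (𝒱 n).Finite ∧ 𝒱 n ⊆ 𝒰 n) ∧
      ∀ x : X, ∀ᶠ n in Filter.atTop, x ∈ ⋃₀ 𝒱 n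

/-- Any family of fewer than `𝔟` functions is eventually dominated by a single function. -/
lemma bounded_of_lt_boundingNumber {ι : Type} (f : ι → ℕ → ℕ)
    (h : Cardinal.mk ι < boundingNumber) : ∃ g : ℕ → ℕ, ∀ i, EvLE (f i) g := by
  by_contra hc
  push_neg at hc
  have hmem : Cardinal.mk (Set.range f) ∈ {c | ∃ B : Set (ℕ → ℕ),
      (¬ ∃ g : ℕ → ℕ, ∀ f ∈ B, EvLE f g) ∧ Cardinal.mk B = c} := by
    refine ⟨Set.range f, ?_, rfl⟩
    rintro ⟨g, hg⟩
    obtain ⟨i, hi⟩ := hc g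
    exact hi (hg (f i) (Set.mem_range_self i))
  have h1 : boundingNumber ≤ Cardinal.mk (Set.range f) := csInf_le' hmem
  exact absurd (lt_of_le_of_lt Cardinal.mk_range_le h) (not_lt.mpr h1)

/-- The key consequence of Hurewicz for a subspace, with covers enumerated by `ℕ`. -/
lemma hurewicz_bound {X : Type} [TopologicalSpace X] {Y : Set X} (hY : HurewiczSpace Y)
    (e : ℕ → ℕ → Set X) (hopen : ∀ n k, IsOpen (e n k))
    (hcov : ∀ n, ⋃ k, e n k = Set.univ) :
    ∃ f : ℕ → ℕ, ∀ y ∈ Y, ∀ᶠ n in Filter.atTop, ∃ k ≤ f n, y ∈ e n k := by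
  set 𝒲 : ℕ → Set (Set Y) := fun n =>
    Set.range (fun k => (Subtype.val : Y → X) ⁻¹' (e n k)) with h𝒲
  have hW : ∀ n, IsOpenCover (𝒲 n) := by
    intro n
    constructor
    · rintro u ⟨k, rfl⟩
      exact (hopen n k).preimage continuous_subtype_val
    · ext y
      simp only [Set.mem_sUnion, Set.mem_univ, iff_true, h𝒲, Set.mem_range]
      have : (y : X) ∈ ⋃ k, e n k := by rw [hcov n]; trivial
      obtain ⟨k, hk⟩ := Set.mem_iUnion.mp this
      exact ⟨_, ⟨k, rfl⟩, hk⟩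
  obtain ⟨𝒱, h𝒱, hx⟩ := hY 𝒲 hW
  classical
  set ind : ℕ → Set Y → ℕ := fun n v =>
    if h : ∃ k, v = (Subtype.val : Y → X) ⁻¹' (e n k) then h.choose else 0 with hind
  refine ⟨fun n => sSup ((ind n) '' 𝒱 n), ?_⟩
  intro y hy
  filter_upwards [hx ⟨y, hy⟩] with n hn
  obtain ⟨v, hv, hyv⟩ := hn
  obtain ⟨k0, hk0⟩ := Set.mem_range.mp ((h𝒱 n).2 hv)
  have hvr : ∃ k, v = (Subtype.val : Y → X) ⁻¹' (e n k) := ⟨k0, hk0.symm⟩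
  refine ⟨ind n v, ?_, ?_⟩
  · exact le_csSup (((h𝒱 n).1.image _).bddAbove) ⟨v, hv, rfl⟩
  · have : v = (Subtype.val : Y → X) ⁻¹' (e n (ind n v)) := by
      rw [hind]; simp only [hvr, dif_pos]; exact hvr.choose_spec
    rw [this] at hyv
    exact hyv

theorem stmt (X : Type) [TopologicalSpace X] 
    (ι : Type) (Y : ι → Set X)
    (hcard : Cardinal.mk ι < boundingNumber)
    (hY : ∀ i, HurewiczSpace (Y i))
    (hcover : ⋃ i, Y i = Set.univ) :
    EStarStarOmega X := by
  intro 𝒰 h𝒰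
  by_cases hX : Nonempty X
  · -- enumerate each cover
    have hne : ∀ n, ∃ e : ℕ → Set X, 𝒰 n = Set.range e := by
      intro n
      refine (h𝒰 n).2.exists_eq_range ?_
      obtain ⟨x⟩ := hX
      have : x ∈ ⋃₀ 𝒰 n := by rw [(h𝒰 n).1.2]; trivial
      obtain ⟨u, hu, _⟩ := this
      exact ⟨u, hu⟩
    choose e he using hne
    have heopen : ∀ n k, IsOpen (e n k) := by
      intro n k
      exact (h𝒰 n).1.1 _ (by rw [he n]; exact Set.mem_range_self k)
    have hecov : ∀ n, ⋃ k, e n k = Set.univ := by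
      intro n
      rw [← Set.sUnion_range, ← he n]
      exact (h𝒰 n).1.2
    have hf : ∀ i, ∃ f : ℕ → ℕ, ∀ y ∈ Y i, ∀ᶠ n in Filter.atTop, ∃ k ≤ f n, y ∈ e n k :=
      fun i => hurewicz_bound (hY i) e heopen hecov
    choose f hfspec using hf
    obtain ⟨g, hg⟩ := bounded_of_lt_boundingNumber f hcard
    refine ⟨fun n => (e n) '' (Set.Iic (g n)), ?_, ?_⟩
    · intro n
      constructor
      · exact (Set.finite_Iic (g n)).image _
      · rintro u ⟨k, _, rfl⟩
        rw [he n]; exact Set.mem_range_self k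
    · intro x
      have hx : x ∈ ⋃ i, Y i := by rw [hcover]; trivial
      obtain ⟨i, hxi⟩ := Set.mem_iUnion.mp hx
      filter_upwards [hfspec i x hxi, hg i] with n hn hle
      obtain ⟨k, hk, hxk⟩ := hn
      exact ⟨e n k, ⟨k, hk.trans hle, rfl⟩, hxk⟩
  · refine ⟨fun _ => ∅, fun n => ⟨Set.finite_empty, Set.empty_subset _⟩, fun x => ?_⟩
    exact absurd ⟨x⟩ hX
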